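/- arXiv:2104.02341 — 2 statements merged into one kernel-verified Lean document; each statement's English description precedes it below -/
import Mathlib

section
/- Let 1 < c₀ ≤ c₁, and set C = 2/c₁² and ε = C·(c₀−1)². Then ε < 2, and for every real t ≥ 1 and every γ with c₀ ≤ γ ≤ c₁, one has 2·(t − 1/t) + C·t − 2·C·γ + C·γ²/t ≥ ε·t. -/
/-- Let `1 < c₀ ≤ c₁`, `C = 2/c₁²`, `ε = C(c₀−1)²`. Then `ε < 2`,
and for every `t ≥ 1` and every `γ ∈ [c₀, c₁]`,
`2(t − 1/t) + Ct − 2Cγ + Cγ²/t ≥ εt`. -/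
theorem stmt_5 (c₀ c₁ C ε : ℝ) (h1 : 1 < c₀) (h2 : c₀ ≤ c₁)
    (hC : C = 2 / c₁ ^ 2) (hε : ε = C * (c₀ - 1) ^ 2) :
    ε < 2 ∧
    ∀ t γ : ℝ, 1 ≤ t → c₀ ≤ γ → γ ≤ c₁ →
      2 * (t - 1 / t) + C * t - 2 * C * γ + C * γ ^ 2 / t ≥ ε * t := by
  have hc1 : (0:ℝ) < c₁ := by linarith
  constructor
  · rw [hε, hC, div_mul_eq_mul_div, div_lt_iff₀ (by positivity)]
    nlinarith
  · intro t γ ht hγ0 hγ1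
    have ht0 : (0:ℝ) < t := by linarith
    rw [hε, hC, ge_iff_le, ← sub_nonneg]
    have key : 2 * (t - 1 / t) + 2 / c₁ ^ 2 * t - 2 * (2 / c₁ ^ 2) * γ
        + 2 / c₁ ^ 2 * γ ^ 2 / t - 2 / c₁ ^ 2 * (c₀ - 1) ^ 2 * t
        = (2 * (t ^ 2 - 1) * c₁ ^ 2 + 2 * (t - γ) ^ 2 - 2 * (c₀ - 1) ^ 2 * t ^ 2)
          / (t * c₁ ^ 2) := by
      field_simp
      ring
    rw [key]
    apply div_nonneg _ (by positivity)
    have hA : (0:ℝ) ≤ c₁ ^ 2 - (c₀ - 1) ^ 2 + 1 - γ := by nlinarith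
    have p1 : (0:ℝ) ≤ (c₁ ^ 2 - (c₀ - 1) ^ 2 + 1) * (t - 1) ^ 2 := by nlinarith [sq_nonneg (t-1)]
    have p2 : (0:ℝ) ≤ (c₁ ^ 2 - (c₀ - 1) ^ 2 + 1 - γ) * (t - 1) :=
      mul_nonneg hA (by linarith)
    have p3 : (0:ℝ) ≤ (γ - 1) ^ 2 - (c₀ - 1) ^ 2 := by nlinarith
    nlinarith [p1, p2, p3]
end

section
/- Let 1 < c₀ ≤ c₁, C₃ > 0 and B₀ > 0 with √C₃ · B₀ ≥ 2c₁. Suppose t ≥ 0, r ≥ C₃·t², γ ∈ [c₀, c₁], χ ∈ [0, 2], and moreover χ = 2 whenever t ≤ B₀ and χ = 0 whenever t ≥ B₀ + 1. Set m = √(1+r) + γ·(χ − 1). Then: (i) if t ≤ B₀ then m ≥ 1 + c₀; (ii) if t > B₀ then |m| ≥ (√C₃/2)·t. -/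
/-- ellipticity of the symbol `m̃ = √(1+r₀) + γ(χ−1)`: Let
`1 < c₀ ≤ c₁`, `C₃ > 0`, `B₀ > 0` with `√C₃·B₀ ≥ 2c₁`. Suppose `t ≥ 0`,
`r ≥ C₃t²`, `γ ∈ [c₀, c₁]`, `χ ∈ [0, 2]`, `χ = 2` whenever `t ≤ B₀` and
`χ = 0` whenever `t ≥ B₀ + 1`. Set `m = √(1+r) + γ(χ−1)`. Then:
(i) if `t ≤ B₀` then `m ≥ 1 + c₀`; (ii) if `t > B₀` then `|m| ≥ (√C₃/2)·t`. -/
theorem stmt_12 (c₀ c₁ C₃ B₀ : ℝ) (h1 : 1 < c₀) (h2 : c₀ ≤ c₁)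
    (hC₃ : 0 < C₃) (hB₀ : 0 < B₀) (hB : Real.sqrt C₃ * B₀ ≥ 2 * c₁)
    (t r γ χ m : ℝ) (ht : 0 ≤ t) (hr : C₃ * t ^ 2 ≤ r)
    (hγ : γ ∈ Set.Icc c₀ c₁) (hχ : χ ∈ Set.Icc (0 : ℝ) 2)
    (hχ2 : t ≤ B₀ → χ = 2) (hχ0 : B₀ + 1 ≤ t → χ = 0)
    (hm : m = Real.sqrt (1 + r) + γ * (χ - 1)) :
    (t ≤ B₀ → 1 + c₀ ≤ m) ∧ (B₀ < t → Real.sqrt C₃ / 2 * t ≤ |m|) := by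

  obtain ⟨hγ0, hγ1⟩ := hγ
  obtain ⟨hχa, hχb⟩ := hχ
  have hr0 : 0 ≤ r := le_trans (by positivity) hr
  have hs1 : (1:ℝ) ≤ Real.sqrt (1 + r) := by
    have := Real.sqrt_le_sqrt (show (1:ℝ) ≤ 1 + r by linarith)
    simpa using this
  constructor
  · intro hle
    rw [hm, hχ2 hle]
    linarith
  · intro hgt
    have hsC : 0 < Real.sqrt C₃ := Real.sqrt_pos.mpr hC₃
    have hst : Real.sqrt C₃ * t ≤ Real.sqrt (1 + r) := by
      have : Real.sqrt (C₃ * t ^ 2) ≤ Real.sqrt (1 + r) :=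
        Real.sqrt_le_sqrt (by linarith)
      calc Real.sqrt C₃ * t = Real.sqrt (C₃ * t ^ 2) := by
            rw [Real.sqrt_mul hC₃.le, Real.sqrt_sq ht]
          _ ≤ Real.sqrt (1 + r) := this
    have hc1 : 2 * c₁ ≤ Real.sqrt C₃ * t := by
      calc 2 * c₁ ≤ Real.sqrt C₃ * B₀ := hB
        _ ≤ Real.sqrt C₃ * t := by nlinarith
    have hγχ : -c₁ ≤ γ * (χ - 1) := by nlinarith
    have : Real.sqrt C₃ / 2 * t ≤ m := by
      rw [hm]; nlinarith
    calc Real.sqrt C₃ / 2 * t ≤ m := this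
      _ ≤ |m| := le_abs_self m
end
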